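/- In the group G = (ℤ/11ℤ)² of order 121, the four 6-element subsets {(0,0),(0,1),(0,3),(1,0),(1,4),(4,2)}, {(0,0),(0,5),(2,0),(4,9),(6,0),(8,5)}, {(0,0),(1,2),(3,1),(4,6),(6,9),(9,3)}, {(0,0),(1,6),(3,7),(5,3),(6,10),(10,2)} form a (121,6,1)-difference family, and hence their translates form a Steiner system S(2,6,121) on 121 points. -/

import Mathlib

/-- Number of ordered pairs of distinct elements of `B` whose difference is `g`. -/
def dcount {G : Type*} [AddCommGroup G] [DecidableEq G] (B : Finset G) (g : G) : ℕ :=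
  ((B ×ˢ B).filter (fun p => p.1 ≠ p.2 ∧ p.1 - p.2 = g)).card

def B11 : Fin 4 → Finset (ZMod 11 × ZMod 11) :=
  ![{(0,0),(0,1),(0,3),(1,0),(1,4),(4,2)}, {(0,0),(0,5),(2,0),(4,9),(6,0),(8,5)},
    {(0,0),(1,2),(3,1),(4,6),(6,9),(9,3)}, {(0,0),(1,6),(3,7),(5,3),(6,10),(10,2)}]

def T11 (g : ZMod 11 × ZMod 11) : Finset (Σ _ : Fin 4, (ZMod 11 × ZMod 11) × (ZMod 11 × ZMod 11)) :=
  Finset.univ.sigma fun i => ((B11 i) ×ˢ (B11 i)).filter (fun p => p.1 - p.2 = g)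

set_option maxHeartbeats 4000000 in
set_option maxRecDepth 10000 in
lemma key11 : ∀ g : ZMod 11 × ZMod 11, g ≠ 0 → (T11 g).card = 1 := by decide

lemma mem_T11 (g : ZMod 11 × ZMod 11) (t : Σ _ : Fin 4, (ZMod 11 × ZMod 11) × (ZMod 11 × ZMod 11)) :
    t ∈ T11 g ↔ t.2.1 ∈ B11 t.1 ∧ t.2.2 ∈ B11 t.1 ∧ t.2.1 - t.2.2 = g := by
  simp [T11, Finset.mem_sigma, Finset.mem_filter, Finset.mem_product, and_assoc]

lemma card_B11 (i : Fin 4) : (B11 i).card = 6 := by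
  fin_cases i <;> decide

theorem stmt_11 :
    (∀ g : ZMod 11 × ZMod 11, g ≠ 0 → (∑ i : Fin 4, dcount (B11 i) g) = 1) ∧
    Fintype.card (ZMod 11 × ZMod 11) = 121 ∧
    (∀ C : Finset (ZMod 11 × ZMod 11),
        (∃ i : Fin 4, ∃ g : ZMod 11 × ZMod 11, C = (B11 i).image (· + g)) →
          C.card = 6) ∧
    (∀ p q : ZMod 11 × ZMod 11, p ≠ q →
        ∃! C : Finset (ZMod 11 × ZMod 11),
          (∃ i : Fin 4, ∃ g : ZMod 11 × ZMod 11, C = (B11 i).image (· + g)) ∧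
            p ∈ C ∧ q ∈ C) := by
  refine ⟨?_, by decide, ?_, ?_⟩
  · intro g hg
    have := key11 g hg
    rw [T11, Finset.card_sigma] at this
    rw [← this]
    refine Finset.sum_congr rfl fun i _ => ?_
    unfold dcount
    congr 1
    refine Finset.filter_congr fun p _ => ?_
    constructor
    · exact fun h => h.2
    · intro h
      refine ⟨fun hpq => hg ?_, h⟩
      rw [← h, hpq, sub_self]
  · rintro C ⟨i, g, rfl⟩
    rw [Finset.card_image_of_injective _ (add_left_injective g), card_B11]
  · intro p q hpq
    have hg : p - q ≠ 0 := sub_ne_zero_of_ne hpq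
    obtain ⟨t, ht⟩ := Finset.card_eq_one.mp (key11 (p - q) hg)
    obtain ⟨i, a, b⟩ := t
    have hmem : a ∈ B11 i ∧ b ∈ B11 i ∧ a - b = p - q := by
      have : (⟨i, a, b⟩ : Σ _ : Fin 4, (ZMod 11 × ZMod 11) × (ZMod 11 × ZMod 11)) ∈ T11 (p - q) := by
        rw [ht]; exact Finset.mem_singleton_self _
      exact (mem_T11 _ _).mp this
    obtain ⟨ha, hb, hab⟩ := hmem
    refine ⟨(B11 i).image (· + (p - a)), ⟨⟨i, p - a, rfl⟩, ?_, ?_⟩, ?_⟩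
    · exact Finset.mem_image.mpr ⟨a, ha, by abel⟩
    · exact Finset.mem_image.mpr ⟨b, hb, by linear_combination -hab⟩
    · rintro C ⟨⟨j, h, rfl⟩, hp, hq⟩
      obtain ⟨a', ha', hpa'⟩ := Finset.mem_image.mp hp
      obtain ⟨b', hb', hqb'⟩ := Finset.mem_image.mp hq
      have hmem' : (⟨j, a', b'⟩ : Σ _ : Fin 4, (ZMod 11 × ZMod 11) × (ZMod 11 × ZMod 11)) ∈ T11 (p - q) := by
        rw [mem_T11]
        exact ⟨ha', hb', by linear_combination hpa' - hqb'⟩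
      rw [ht, Finset.mem_singleton] at hmem'
      obtain ⟨hji, hab'⟩ := Sigma.mk.inj_iff.mp hmem'
      subst hji
      obtain ⟨ha'', hb''⟩ := Prod.mk_inj.mp (eq_of_heq hab')
      subst ha''
      have : h = p - a' := by linear_combination hpa'
      rw [this]
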